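/- Let G and H be finite connected simple graphs and fix a root (r_G, r_H) of G□H. Every pebbling configuration c on G□H that is not (r_G, r_H)-solvable satisfies Σ_{j∈V(H)} ⌊c̃_j / π(G)⌋ ≤ π(H) − 1, and symmetrically Σ_{i∈V(G)} ⌊(Σ_{j∈V(H)} c(i,j)) / π(H)⌋ ≤ π(G) − 1. -/

import Mathlib

open SimpleGraph Finset

/-- A single pebbling move on `G`: remove two pebbles from a vertex `v` with at least two
pebbles and add one pebble to an adjacent vertex `w`. -/
def PebblingMove {V : Type*} (G : SimpleGraph V) (c c' : V → ℕ) : Prop :=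
  ∃ v w, G.Adj v w ∧ 2 ≤ c v ∧ c' v = c v - 2 ∧ c' w = c w + 1 ∧
    ∀ u, u ≠ v → u ≠ w → c' u = c u

/-- Some finite sequence of pebbling moves starting from `c` places at least `t` pebbles
on the vertex `r`. -/
def NSolvable {V : Type*} (G : SimpleGraph V) (c : V → ℕ) (r : V) (t : ℕ) : Prop :=
  ∃ c', Relation.ReflTransGen (PebblingMove G) c c' ∧ t ≤ c' r

/-- A configuration `c` is `r`-solvable. -/
def Solvable {V : Type*} (G : SimpleGraph V) (c : V → ℕ) (r : V) : Prop :=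
  NSolvable G c r 1

/-- The pebbling number `π(G)`: least `k` such that every configuration of size `k` is
`r`-solvable for every root `r`. -/
noncomputable def pebblingNumber {V : Type*} (G : SimpleGraph V) [Fintype V] : ℕ :=
  sInf {k | ∀ c : V → ℕ, (∑ v, c v) = k → ∀ r, Solvable G c r}

/-- The 2-pebbling number `π₂(G, s)`: least `m` such that for every root `r`, every
configuration of size at least `m` with support of size exactly `s` can place two pebbles
on `r`. -/
noncomputable def twoPebblingNumber {V : Type*} (G : SimpleGraph V) [Fintype V] (s : ℕ) : ℕ :=
  sInf {m | ∀ (r : V) (c : V → ℕ), m ≤ ∑ v, c v →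
    (Finset.univ.filter fun v => 1 ≤ c v).card = s → NSolvable G c r 2}

/-!
If the set counts of the `G`-slices add up to `π(H)`, pebble inside each slice `G_j` to gather
`⌊c̃_j / π(G)⌋` pebbles on `(r_G, j)`: every `π(G)` pebbles of a slice yield one more pebble on
any vertex of it. The pebbles now on the copy `{r_G} × H` number at least `π(H)`, so moves inside
that copy bring one of them to `(r_G, r_H)`. The second bound is the first one for `H □ G`.
-/

open Function Relation

section Moves

variable {V W : Type*} {G : SimpleGraph V} {G' : SimpleGraph W}

theorem PebblingMove.add_right {c c' : V → ℕ} (h : PebblingMove G c c') (b : V → ℕ) :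
    PebblingMove G (c + b) (c' + b) := by
  obtain ⟨v, w, hvw, hv2, hv, hw, hother⟩ := h
  refine ⟨v, w, hvw, ?_, ?_, ?_, fun u hu hu' => ?_⟩ <;> simp only [Pi.add_apply]
  · omega
  · omega
  · omega
  · rw [hother u hu hu']

theorem PebblingMove.map (f : G ↪g G') {c c' : V → ℕ} (h : PebblingMove G c c') :
    PebblingMove G' (extend f c 0) (extend f c' 0) := by
  obtain ⟨v, w, hvw, hv2, hv, hw, hother⟩ := h
  have hf := f.injective
  refine ⟨f v, f w, f.map_adj_iff.2 hvw, ?_, ?_, ?_, fun x hxv hxw => ?_⟩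
  · rwa [hf.extend_apply]
  · rw [hf.extend_apply, hf.extend_apply, hv]
  · rw [hf.extend_apply, hf.extend_apply, hw]
  · by_cases hx : ∃ u, f u = x
    · obtain ⟨u, rfl⟩ := hx
      rw [hf.extend_apply, hf.extend_apply,
        hother u (ne_of_apply_ne f hxv) (ne_of_apply_ne f hxw)]
    · rw [extend_apply' _ _ _ hx, extend_apply' _ _ _ hx]

theorem PebblingMove.exists_of_adj {v w : V} (hvw : G.Adj v w) {c : V → ℕ} (hc : 2 ≤ c v) :
    ∃ c', PebblingMove G c c' ∧ c' v = c v - 2 ∧ c' w = c w + 1 := by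
  classical
  refine ⟨update (update c v (c v - 2)) w (c w + 1), ⟨v, w, hvw, hc, ?_, ?_, ?_⟩, ?_, ?_⟩ <;>
    simp [update_apply, hvw.ne]
  intro u hu hu'
  simp [hu, hu']

theorem reflTransGen_pebblingMove_add_right {c c' : V → ℕ}
    (h : ReflTransGen (PebblingMove G) c c') (b : V → ℕ) :
    ReflTransGen (PebblingMove G) (c + b) (c' + b) :=
  h.lift (· + b) fun _ _ hm => hm.add_right b

theorem reflTransGen_pebblingMove_add {a a' b b' : V → ℕ}
    (ha : ReflTransGen (PebblingMove G) a a') (hb : ReflTransGen (PebblingMove G) b b') :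
    ReflTransGen (PebblingMove G) (a + b) (a' + b') := by
  refine (reflTransGen_pebblingMove_add_right ha b).trans ?_
  rw [add_comm a', add_comm a']
  exact reflTransGen_pebblingMove_add_right hb a'

theorem reflTransGen_pebblingMove_sum {ι : Type*} (s : Finset ι) {a d : ι → V → ℕ}
    (h : ∀ j ∈ s, ReflTransGen (PebblingMove G) (a j) (d j)) :
    ReflTransGen (PebblingMove G) (∑ j ∈ s, a j) (∑ j ∈ s, d j) := by
  classical
  induction s using Finset.induction_on with
  | empty => simpa using ReflTransGen.refl
  | insert j s hj ih =>
    rw [sum_insert hj, sum_insert hj]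
    exact reflTransGen_pebblingMove_add (h j (mem_insert_self j s))
      (ih fun k hk => h k (mem_insert_of_mem hk))

theorem reflTransGen_pebblingMove_map (f : G ↪g G') {c c' : V → ℕ}
    (h : ReflTransGen (PebblingMove G) c c') :
    ReflTransGen (PebblingMove G') (extend f c 0) (extend f c' 0) :=
  h.lift (fun x => extend f x (0 : W → ℕ)) fun _ _ hm => hm.map f

theorem exists_reflTransGen_pebblingMove_of_adj {v w : V} (hvw : G.Adj v w) (k : ℕ)
    {c : V → ℕ} (hc : 2 * k ≤ c v) :
    ∃ c', ReflTransGen (PebblingMove G) c c' ∧ c w + k ≤ c' w := by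
  induction k generalizing c with
  | zero => exact ⟨c, .refl, le_rfl⟩
  | succ k ih =>
    obtain ⟨c₁, hmove, hv, hw⟩ := PebblingMove.exists_of_adj hvw (c := c) (by omega)
    obtain ⟨c', hreach, hc'⟩ := ih (c := c₁) (by omega)
    exact ⟨c', .head hmove hreach, by omega⟩

end Moves

section Solvability

variable {V W : Type*} {G : SimpleGraph V} {G' : SimpleGraph W}

theorem NSolvable.of_reflTransGen {c c' : V → ℕ} {r : V} {t : ℕ}
    (h : ReflTransGen (PebblingMove G) c c') (h' : NSolvable G c' r t) : NSolvable G c r t :=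
  let ⟨d, hd, hdr⟩ := h'
  ⟨d, h.trans hd, hdr⟩

theorem NSolvable.add {a b : V → ℕ} {r : V} {s t : ℕ}
    (ha : NSolvable G a r s) (hb : NSolvable G b r t) : NSolvable G (a + b) r (s + t) :=
  let ⟨a', ha', har⟩ := ha
  let ⟨b', hb', hbr⟩ := hb
  ⟨a' + b', reflTransGen_pebblingMove_add ha' hb', Nat.add_le_add har hbr⟩

theorem NSolvable.mono {a c : V → ℕ} {r : V} {t : ℕ} (h : NSolvable G a r t) (hle : a ≤ c) :
    NSolvable G c r t := by
  rw [← add_tsub_cancel_of_le hle]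
  exact h.add (t := 0) ⟨c - a, .refl, Nat.zero_le _⟩

theorem NSolvable.map_of_le (f : G ↪g G') {c : V → ℕ} {C : W → ℕ} {r : V} {t : ℕ}
    (h : NSolvable G c r t) (hle : ∀ v, c v ≤ C (f v)) : NSolvable G' C (f r) t := by
  obtain ⟨d, hd, hdr⟩ := h
  refine NSolvable.mono ⟨extend f d 0, reflTransGen_pebblingMove_map f hd, ?_⟩ fun x => ?_
  · rwa [f.injective.extend_apply]
  · by_cases hx : ∃ v, f v = x
    · obtain ⟨v, rfl⟩ := hx
      rw [f.injective.extend_apply]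
      exact hle v
    · rw [extend_apply' _ _ _ hx]
      exact Nat.zero_le _

theorem solvable_of_walk {v r : V} (p : G.Walk v r) {c : V → ℕ} (hc : 2 ^ p.length ≤ c v) :
    Solvable G c r := by
  induction p generalizing c with
  | nil => exact ⟨c, .refl, by simpa using hc⟩
  | cons hadj p ih =>
    rw [Walk.length_cons, pow_succ] at hc
    obtain ⟨c', hreach, hc'⟩ :=
      exists_reflTransGen_pebblingMove_of_adj hadj (2 ^ p.length) (c := c) (by omega)
    exact NSolvable.of_reflTransGen hreach (ih (by omega))

theorem exists_add_eq_of_le_sum [Fintype V] {c : V → ℕ} {m : ℕ} (h : m ≤ ∑ v, c v) :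
    ∃ b d : V → ℕ, b + d = c ∧ ∑ v, b v = m := by
  classical
  suffices ∃ b ≤ c, ∑ v, b v = m from
    let ⟨b, hbc, hb⟩ := this
    ⟨b, c - b, add_tsub_cancel_of_le hbc, hb⟩
  induction m with
  | zero => exact ⟨0, fun v => Nat.zero_le _, by simp⟩
  | succ m ih =>
    obtain ⟨b, hbc, hb⟩ := ih (by omega)
    obtain ⟨v, -, hv⟩ := Finset.exists_lt_of_sum_lt (s := univ) (f := b) (g := c) (by omega)
    refine ⟨b + Pi.single v 1, fun u => ?_, by simp [sum_add_distrib, hb]⟩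
    rcases eq_or_ne u v with rfl | hu
    · simpa using hv
    · simpa [hu] using hbc u

end Solvability

section PebblingNumber

variable {V : Type*} [Fintype V] {G : SimpleGraph V}

theorem solvable_of_sum_eq_pebblingNumber (hG : G.Connected) {c : V → ℕ}
    (hc : ∑ v, c v = pebblingNumber G) (r : V) : Solvable G c r := by
  classical
  refine Nat.sInf_mem (s := {k | ∀ c : V → ℕ, ∑ v, c v = k → ∀ r, Solvable G c r})
    ⟨Fintype.card V * 2 ^ Fintype.card V, fun c hc r => ?_⟩ c hc r
  -- With `|V| * 2 ^ |V|` pebbles some vertex carries `2 ^ |V|`, enough to push one along a path.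
  obtain ⟨v, -, hv⟩ := Finset.exists_le_of_sum_le (univ_nonempty_iff.2 hG.nonempty)
    (f := fun _ => 2 ^ Fintype.card V) (g := c) (by simp [hc])
  obtain ⟨p⟩ := hG.preconnected v r
  exact solvable_of_walk p.bypass
    ((Nat.pow_le_pow_right two_pos p.bypass_isPath.length_lt.le).trans hv)

theorem solvable_of_pebblingNumber_le (hG : G.Connected) {c : V → ℕ}
    (hc : pebblingNumber G ≤ ∑ v, c v) (r : V) : Solvable G c r := by
  obtain ⟨b, d, rfl, hb⟩ := exists_add_eq_of_le_sum hc
  exact (solvable_of_sum_eq_pebblingNumber hG hb r).mono le_self_add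

theorem nsolvable_of_mul_pebblingNumber_le (hG : G.Connected) {c : V → ℕ} {t : ℕ}
    (hc : t * pebblingNumber G ≤ ∑ v, c v) (r : V) : NSolvable G c r t := by
  induction t generalizing c with
  | zero => exact ⟨c, .refl, Nat.zero_le _⟩
  | succ t ih =>
    rw [Nat.succ_mul] at hc
    obtain ⟨b, d, rfl, hb⟩ := exists_add_eq_of_le_sum (c := c) (m := pebblingNumber G) (by omega)
    have hd : t * pebblingNumber G ≤ ∑ v, d v := by
      simp only [Pi.add_apply, Finset.sum_add_distrib, hb] at hc
      omega
    rw [add_comm t]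
    exact (solvable_of_sum_eq_pebblingNumber hG hb r).add (ih hd)

end PebblingNumber

section BoxProd

variable {α β : Type*} {G : SimpleGraph α} {H : SimpleGraph β}

theorem reflTransGen_boxProd_of_slices [Fintype β] {a d : β → α → ℕ}
    (h : ∀ j, ReflTransGen (PebblingMove G) (a j) (d j)) :
    ReflTransGen (PebblingMove (G □ H)) (fun p => a p.2 p.1) (fun p => d p.2 p.1) := by
  have slices (x : β → α → ℕ) :
      (fun p : α × β => x p.2 p.1) = ∑ j, extend (boxProdLeft G H j) (x j) 0 := by
    classical
    funext p
    rw [Finset.sum_apply, Finset.sum_eq_single p.2]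
    · exact ((boxProdLeft G H p.2).injective.extend_apply _ _ p.1).symm
    · intro j _ hj
      refine extend_apply' _ _ _ fun ⟨i, hi⟩ => hj ?_
      rw [← hi]
      rfl
    · simp
  rw [slices a, slices d]
  exact reflTransGen_pebblingMove_sum univ fun j _ =>
    reflTransGen_pebblingMove_map (boxProdLeft G H j) (h j)

theorem sum_div_pebblingNumber_le_of_not_solvable [Fintype α] [Fintype β]
    (hG : G.Connected) (hH : H.Connected) {c : α × β → ℕ} {rG : α} {rH : β}
    (hns : ¬ Solvable (G □ H) c (rG, rH)) :
    ∑ j, (∑ i, c (i, j)) / pebblingNumber G ≤ pebblingNumber H - 1 := by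
  by_contra! hlt
  have hsets : pebblingNumber H ≤ ∑ j, (∑ i, c (i, j)) / pebblingNumber G := by omega
  have hslice (j : β) : NSolvable G (fun i => c (i, j)) rG ((∑ i, c (i, j)) / pebblingNumber G) :=
    nsolvable_of_mul_pebblingNumber_le hG (Nat.div_mul_le_self _ _) rG
  choose d hd hdr using hslice
  exact hns <| NSolvable.of_reflTransGen (reflTransGen_boxProd_of_slices hd) <|
    (solvable_of_pebblingNumber_le hH hsets rH).map_of_le (boxProdRight G H rG) hdr

end BoxProd

/-- Every configuration on `G □ H` that is not `(r_G, r_H)`-solvable has total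
`G`-set count at most `π(H) - 1` and total `H`-set count at most `π(G) - 1`. -/
theorem stmt2 {α β : Type*} [Fintype α] [Fintype β]
    (G : SimpleGraph α) (H : SimpleGraph β) (hG : G.Connected) (hH : H.Connected)
    (c : α × β → ℕ) (rG : α) (rH : β)
    (hns : ¬ Solvable (G.boxProd H) c (rG, rH)) :
    (∑ j : β, (∑ i : α, c (i, j)) / pebblingNumber G ≤ pebblingNumber H - 1) ∧
    (∑ i : α, (∑ j : β, c (i, j)) / pebblingNumber H ≤ pebblingNumber G - 1) := by
  refine ⟨sum_div_pebblingNumber_le_of_not_solvable hG hH hns, ?_⟩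
  have hns' : ¬ Solvable (H □ G) (fun p => c p.swap) (rH, rG) := fun h =>
    hns (NSolvable.map_of_le (boxProdComm H G).toEmbedding h fun _ => le_rfl)
  simpa using sum_div_pebblingNumber_le_of_not_solvable hH hG hns'
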